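/- (Picard iteration bound for the adapted kinetic equation.) Let (ξⁿ) be a sequence of curves in C_μ([0,T], M(D*)) defined by ξ⁰_t = μ for all t and ξⁿ_t = Ũ^{t,0}[ξ^{n−1}_{≤t}]μ, where the propagators depend only on the past of the curve (adaptedness). Under the standing assumptions (Lipschitz constant c₁ for generators, propagator bounds c₂, c₃, mass bound K), one has for all n ≥ 1 and t ∈ [0,T]: sup_{0≤r≤t} ‖ξⁿ_r − ξ^{n−1}_r‖_{D*} ≤ (c₁c₂c₃Kt)ⁿ / n!. -/

import Mathlib

set_option autoImplicit false

open MeasureTheory Set NormedSpace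

noncomputable section

/-- The embedding of `B*` into `D*` induced by the inclusion `ι : D →L[ℝ] B`. -/
def embDual {B D : Type*} [NormedAddCommGroup B] [NormedSpace ℝ B]
    [NormedAddCommGroup D] [NormedSpace ℝ D] (ι : D →L[ℝ] B)
    (ν : StrongDual ℝ B) : StrongDual ℝ D := ν.comp ι

/-- Continuous curves `[0,T] → M ⊂ B*`, continuity in the `D*`-norm. -/
def AdmCurve {B D : Type*} [NormedAddCommGroup B] [NormedSpace ℝ B]
    [NormedAddCommGroup D] [NormedSpace ℝ D] (ι : D →L[ℝ] B)
    (M : Set (StrongDual ℝ B)) (T : ℝ) (ξ : ℝ → StrongDual ℝ B) : Prop :=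
  (∀ t ∈ Icc (0:ℝ) T, ξ t ∈ M) ∧
  ContinuousOn (fun t => embDual ι (ξ t)) (Icc (0:ℝ) T)

open Filter Topology Asymptotics

/-!
For curves `η, ζ` and `r ≤ T` the Duhamel path `q ↦ μ (U η 0 q (U ζ q r (ι f)))` runs from
`μ (U ζ 0 r (ι f))` to `μ (U η 0 r (ι f))`, and its derivative is
`μ (U η 0 q ((A η q - A ζ q) (UD ζ q r f)))`, of norm at most `K c₃ c₁ c₂ ‖f‖` times the
distance of `η` and `ζ`. The Lipschitz bound for `A` involves the distance over all of `[0, T]`,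
but the derivative at `q` only depends on `η` up to a little after `q`, since the propagator is
adapted. Replacing `η` by a convex combination that agrees with `η` until just after `q` and with
`ζ` shortly afterwards, the distance over the past of `q` suffices. Hence a bound
`(C s)ⁿ / n!` on the distance of two consecutive iterates integrates to
`(C r)ⁿ⁺¹ / (n + 1)!` for the next pair, with `C = c₁ c₂ c₃ K`.
-/

theorem HasDerivWithinAt.clm_apply_of_bounded {E F : Type*} [NormedAddCommGroup E] [NormedSpace ℝ E]
    [NormedAddCommGroup F] [NormedSpace ℝ F] {P : ℝ → E →L[ℝ] F} {v : ℝ → E} {p' : F} {v' : E}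
    {s : Set ℝ} {x c : ℝ}
    (hP : HasDerivWithinAt (fun q => P q (v x)) p' s x) (hv : HasDerivWithinAt v v' s x)
    (hPbdd : ∀ᶠ q in 𝓝[s] x, ‖P q‖ ≤ c) (hPv' : ContinuousWithinAt (fun q => P q v') s x) :
    HasDerivWithinAt (fun q => P q (v q)) (p' + P x v') s x := by
  have hrem : HasDerivWithinAt (fun q => P q (v q - v x)) (P x v') s x := by
    rw [hasDerivWithinAt_iff_isLittleO]
    have hlin : (fun q => P q (v q - v x - (q - x) • v')) =o[𝓝[s] x] fun q => q - x :=
      (IsBigO.of_bound c (hPbdd.mono fun q hq => (P q).le_of_opNorm_le hq _)).trans_isLittleO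
        (hasDerivWithinAt_iff_isLittleO.1 hv)
    have hcont : (fun q => (q - x) • (P q v' - P x v')) =o[𝓝[s] x] fun q => (q - x) • (1 : ℝ) :=
      (isBigO_refl _ _).smul_isLittleO
        ((isLittleO_one_iff ℝ).2 (tendsto_sub_nhds_zero_iff.2 hPv'))
    refine (hlin.add (hcont.congr_right fun q => (smul_eq_mul ..).trans (mul_one _))).congr_left
      fun q => ?_
    simp only [map_sub, map_smul, sub_self, map_zero, smul_sub]
    abel
  convert hP.add hrem using 1
  ext q
  simp

theorem norm_sub_le_of_norm_deriv_le_pow {E : Type*} [NormedAddCommGroup E] [NormedSpace ℝ E]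
    {f f' : ℝ → E} {a C r : ℝ} (m : ℕ) (hr : 0 ≤ r)
    (hf : ∀ x ∈ Icc 0 r, HasDerivWithinAt f (f' x) (Icc 0 r) x)
    (hbound : ∀ x ∈ Ico 0 r, ‖f' x‖ ≤ a * (C * ((C * x) ^ m / m.factorial))) :
    ‖f r - f 0‖ ≤ a * ((C * r) ^ (m + 1) / (m + 1).factorial) := by
  have hB : ∀ x, HasDerivAt (fun q => a * ((C * q) ^ (m + 1) / (m + 1).factorial))
      (a * (C * ((C * x) ^ m / m.factorial))) x := by
    intro x
    refine ((((hasDerivAt_id x).const_mul C).pow (m + 1)).div_const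
      ((m + 1).factorial : ℝ) |>.const_mul a).congr_deriv ?_
    rw [Nat.factorial_succ]
    push_cast
    field_simp
    simp
  exact image_norm_le_of_norm_deriv_right_le_deriv_boundary
    (f := fun q => f q - f 0) (fun x hx => ((hf x hx).sub_const _).continuousWithinAt)
    (fun x hx => ((hf x (Ico_subset_Icc_self hx)).sub_const _).mono_of_mem_nhdsWithin
      (Icc_mem_nhdsGE_of_mem hx)) (by simp) hB hbound (right_mem_Icc.2 hr)

section

variable {B D : Type*} [NormedAddCommGroup B] [NormedSpace ℝ B]
  [NormedAddCommGroup D] [NormedSpace ℝ D]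
  {ι : D →L[ℝ] B} {M : Set (StrongDual ℝ B)} {T c₁ c₂ c₃ : ℝ}
  {A : (ℝ → StrongDual ℝ B) → ℝ → (D →L[ℝ] B)}
  {U : (ℝ → StrongDual ℝ B) → ℝ → ℝ → (B →L[ℝ] B)}
  {UD : (ℝ → StrongDual ℝ B) → ℝ → ℝ → (D →L[ℝ] D)}

theorem embDual_add_smul_sub (ι : D →L[ℝ] B) (ν ν' : StrongDual ℝ B) (c : ℝ) :
    embDual ι (ν + c • (ν' - ν)) - embDual ι ν = c • (embDual ι ν' - embDual ι ν) := by
  ext f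
  simp [embDual]

theorem AdmCurve.add_smul_sub (hM : Convex ℝ M) {η ζ : ℝ → StrongDual ℝ B}
    (hη : AdmCurve ι M T η) (hζ : AdmCurve ι M T ζ) {w : ℝ → ℝ} (hw : Continuous w)
    (hw01 : ∀ s, w s ∈ Icc (0:ℝ) 1) :
    AdmCurve ι M T (fun s => ζ s + w s • (η s - ζ s)) := by
  refine ⟨fun s hs => hM.add_smul_sub_mem (hζ.1 s hs) (hη.1 s hs) (hw01 s), ?_⟩
  have hemb : (fun s => embDual ι (ζ s + w s • (η s - ζ s)))
      = fun s => embDual ι (ζ s) + w s • (embDual ι (η s) - embDual ι (ζ s)) := by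
    funext s
    rw [← embDual_add_smul_sub, add_sub_cancel]
  rw [hemb]
  exact hζ.2.add (hw.continuousOn.smul (hη.2.sub hζ.2))

theorem propagator_generator_eq_of_eqOn_Iic (hT : 0 < T)
    (hgen₁ : ∀ ξ, AdmCurve ι M T ξ → ∀ (f : D) (t : ℝ), t ∈ Icc (0:ℝ) T →
      ∀ s ∈ Icc t T,
      HasDerivWithinAt (fun r => U ξ t r (ι f)) (U ξ t s (A ξ s f)) (Icc t T) s)
    (hadapt : ∀ ξ η t, t ∈ Icc (0:ℝ) T → (∀ r ∈ Icc (0:ℝ) t, ξ r = η r) →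
      U ξ 0 t = U η 0 t)
    {η α : ℝ → StrongDual ℝ B} (hη : AdmCurve ι M T η) (hα : AdmCurve ι M T α)
    {a x : ℝ} (hx : x ∈ Icc 0 T) (hxa : x < a) (heq : EqOn η α (Iic a)) (g : D) :
    U η 0 x (A η x g) = U α 0 x (A α x g) := by
  have h0 : (0:ℝ) ∈ Icc 0 T := left_mem_Icc.2 hT.le
  have hpast : (fun q => U η 0 q (ι g)) =ᶠ[𝓝[Icc 0 T] x] fun q => U α 0 q (ι g) := by
    filter_upwards [inter_mem_nhdsWithin (Icc 0 T) (Iio_mem_nhds hxa)] with q ⟨hq, hqa⟩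
    rw [hadapt η α q hq fun s hs => heq (hs.2.trans hqa.le)]
  exact (uniqueDiffOn_Icc hT x hx).eq_deriv _ (hgen₁ η hη g 0 h0 x hx)
    ((hgen₁ α hα g 0 h0 x hx).congr_of_eventuallyEq hpast
      (by rw [hadapt η α x hx fun s hs => heq (hs.2.trans hxa.le)]))

theorem hasDerivWithinAt_duhamel
    (hUDcompat : ∀ ξ t s f, ι (UD ξ t s f) = U ξ t s (ι f))
    (hUbdd : ∀ ξ, AdmCurve ι M T ξ → ∀ t s, 0 ≤ t → t ≤ s → s ≤ T → ‖U ξ t s‖ ≤ c₃)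
    (hUcont : ∀ ξ, AdmCurve ι M T ξ → ∀ v : B,
      ContinuousOn (fun q : ℝ × ℝ => U ξ q.1 q.2 v)
        {q : ℝ × ℝ | 0 ≤ q.1 ∧ q.1 ≤ q.2 ∧ q.2 ≤ T})
    (hgen₁ : ∀ ξ, AdmCurve ι M T ξ → ∀ (f : D) (t : ℝ), t ∈ Icc (0:ℝ) T →
      ∀ s ∈ Icc t T,
      HasDerivWithinAt (fun r => U ξ t r (ι f)) (U ξ t s (A ξ s f)) (Icc t T) s)
    (hgen₂ : ∀ ξ, AdmCurve ι M T ξ → ∀ (f : D) (r : ℝ), r ∈ Icc (0:ℝ) T →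
      ∀ s ∈ Icc (0:ℝ) r,
      HasDerivWithinAt (fun q => U ξ q r (ι f)) (-(A ξ s (UD ξ s r f)))
        (Icc (0:ℝ) r) s)
    {η ζ : ℝ → StrongDual ℝ B} (hη : AdmCurve ι M T η) (hζ : AdmCurve ι M T ζ)
    (f : D) {r x : ℝ} (hr : r ∈ Icc 0 T) (hx : x ∈ Icc 0 r) :
    HasDerivWithinAt (fun q => U η 0 q (U ζ q r (ι f)))
      (U η 0 x (A η x (UD ζ x r f) - A ζ x (UD ζ x r f))) (Icc 0 r) x := by
  have hsub : Icc 0 r ⊆ Icc 0 T := Icc_subset_Icc_right hr.2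
  have hP : HasDerivWithinAt (fun q => U η 0 q (U ζ x r (ι f)))
      (U η 0 x (A η x (UD ζ x r f))) (Icc 0 r) x := by
    rw [← hUDcompat]
    exact (hgen₁ η hη _ 0 (left_mem_Icc.2 (hr.1.trans hr.2)) x (hsub hx)).mono hsub
  have hbdd : ∀ᶠ q in 𝓝[Icc 0 r] x, ‖U η 0 q‖ ≤ c₃ :=
    eventually_nhdsWithin_of_forall fun q hq => hUbdd η hη 0 q le_rfl hq.1 (hq.2.trans hr.2)
  have hcont : ContinuousWithinAt (fun q => U η 0 q (-(A ζ x (UD ζ x r f)))) (Icc 0 r) x :=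
    ((hUcont η hη _).comp (Continuous.prodMk_right 0).continuousOn
      fun q hq => ⟨le_rfl, hq.1, hq.2.trans hr.2⟩) x hx
  simpa [sub_eq_add_neg] using
    hP.clm_apply_of_bounded (hgen₂ ζ hζ f r hr x hx) hbdd hcont

theorem norm_propagator_generator_sub_le (hT : 0 < T) (hMconv : Convex ℝ M)
    (hc₁ : 0 ≤ c₁) (hc₃ : 0 ≤ c₃)
    (hAlip : ∀ ξ η, AdmCurve ι M T ξ → AdmCurve ι M T η → ∀ t ∈ Icc (0:ℝ) T,
      ‖A ξ t - A η t‖ ≤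
        c₁ * ⨆ s : Icc (0:ℝ) T, ‖embDual ι (ξ (s:ℝ)) - embDual ι (η (s:ℝ))‖)
    (hUbdd : ∀ ξ, AdmCurve ι M T ξ → ∀ t s, 0 ≤ t → t ≤ s → s ≤ T → ‖U ξ t s‖ ≤ c₃)
    (hgen₁ : ∀ ξ, AdmCurve ι M T ξ → ∀ (f : D) (t : ℝ), t ∈ Icc (0:ℝ) T →
      ∀ s ∈ Icc t T,
      HasDerivWithinAt (fun r => U ξ t r (ι f)) (U ξ t s (A ξ s f)) (Icc t T) s)
    (hadapt : ∀ ξ η t, t ∈ Icc (0:ℝ) T → (∀ r ∈ Icc (0:ℝ) t, ξ r = η r) →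
      U ξ 0 t = U η 0 t)
    {η ζ : ℝ → StrongDual ℝ B} (hη : AdmCurve ι M T η) (hζ : AdmCurve ι M T ζ)
    {φ : ℝ → ℝ} (hφmono : MonotoneOn φ (Ici 0)) (hφcont : Continuous φ)
    (hφ : ∀ s ∈ Icc 0 T, ‖embDual ι (η s) - embDual ι (ζ s)‖ ≤ φ s)
    {x : ℝ} (hx : x ∈ Icc 0 T) (g : D) :
    ‖U η 0 x (A η x g - A ζ x g)‖ ≤ c₃ * (c₁ * φ x) * ‖g‖ := by
  suffices h : ∀ b > x, ‖U η 0 x (A η x g - A ζ x g)‖ ≤ c₃ * (c₁ * φ b) * ‖g‖ by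
    refine ge_of_tendsto (x := 𝓝[>] x) ?_ (eventually_nhdsWithin_of_forall h)
    exact (((hφcont.tendsto x).const_mul c₁).const_mul c₃).mul_const _ |>.mono_left
      nhdsWithin_le_nhds
  intro b hxb
  obtain ⟨w, hw_future, hw_past, hw01⟩ := exists_continuous_zero_one_of_isClosed
    (isClosed_Ici (a := b)) (isClosed_Iic (a := (x + b) / 2))
    (Ici_disjoint_Iic.2 (by linarith))
  set α : ℝ → StrongDual ℝ B := fun s => ζ s + w s • (η s - ζ s)
  have hα : AdmCurve ι M T α := hη.add_smul_sub hMconv hζ w.continuous hw01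
  have hαη : EqOn η α (Iic ((x + b) / 2)) := fun s hs => by
    simp [α, hw_past hs]
  have hxa : x < (x + b) / 2 := by linarith
  have hUeq : U η 0 x = U α 0 x := hadapt η α x hx fun s hs => hαη (by simp only [mem_Iic]; linarith [hs.2])
  have hgen : U η 0 x (A η x g) = U α 0 x (A α x g) :=
    propagator_generator_eq_of_eqOn_Iic hT hgen₁ hadapt hη hα hx hxa hαη g
  have hsup : ⨆ s : Icc (0:ℝ) T, ‖embDual ι (α s) - embDual ι (ζ s)‖ ≤ φ b := by
    have : Nonempty (Icc (0:ℝ) T) := ⟨⟨0, left_mem_Icc.2 hT.le⟩⟩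
    refine ciSup_le fun ⟨s, hs⟩ => ?_
    rw [embDual_add_smul_sub, norm_smul, Real.norm_of_nonneg (hw01 s).1]
    rcases le_or_gt s b with hsb | hbs
    · calc w s * ‖embDual ι (η s) - embDual ι (ζ s)‖ ≤ 1 * φ s := by
            gcongr
            exacts [(hw01 s).2, hφ s hs]
        _ ≤ φ b := by rw [one_mul]; exact hφmono hs.1 (hs.1.trans hsb) hsb
    · rw [hw_future (mem_Ici.2 hbs.le), Pi.zero_apply, zero_mul]
      exact (norm_nonneg _).trans ((hφ 0 (left_mem_Icc.2 hT.le)).trans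
        (hφmono self_mem_Ici (hx.1.trans hxb.le) (hx.1.trans hxb.le)))
  calc ‖U η 0 x (A η x g - A ζ x g)‖ = ‖U α 0 x ((A α x - A ζ x) g)‖ := by
        rw [map_sub, hgen, hUeq, ← map_sub, sub_apply]
    _ ≤ c₃ * (‖A α x - A ζ x‖ * ‖g‖) :=
        (U α 0 x).le_of_opNorm_le (hUbdd α hα 0 x le_rfl hx.1 hx.2) _ |>.trans
          (by gcongr; exact (A α x - A ζ x).le_opNorm g)
    _ ≤ c₃ * (c₁ * φ b * ‖g‖) := by
        gcongr
        exact (hAlip α ζ hα hζ x hx).trans (by gcongr)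
    _ = c₃ * (c₁ * φ b) * ‖g‖ := by ring

theorem norm_embDual_comp_propagator_sub_le (hT : 0 < T) (hMconv : Convex ℝ M)
    {K : ℝ} (hK : 0 ≤ K) (hc₁ : 0 ≤ c₁) (hc₂ : 0 ≤ c₂) (hc₃ : 0 ≤ c₃)
    {μ : StrongDual ℝ B} (hμ : ‖μ‖ ≤ K)
    (hAlip : ∀ ξ η, AdmCurve ι M T ξ → AdmCurve ι M T η → ∀ t ∈ Icc (0:ℝ) T,
      ‖A ξ t - A η t‖ ≤
        c₁ * ⨆ s : Icc (0:ℝ) T, ‖embDual ι (ξ (s:ℝ)) - embDual ι (η (s:ℝ))‖)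
    (hUid : ∀ ξ t, U ξ t t = ContinuousLinearMap.id ℝ B)
    (hUDcompat : ∀ ξ t s f, ι (UD ξ t s f) = U ξ t s (ι f))
    (hUbdd : ∀ ξ, AdmCurve ι M T ξ → ∀ t s, 0 ≤ t → t ≤ s → s ≤ T → ‖U ξ t s‖ ≤ c₃)
    (hUDbdd : ∀ ξ, AdmCurve ι M T ξ → ∀ t s, 0 ≤ t → t ≤ s → s ≤ T → ‖UD ξ t s‖ ≤ c₂)
    (hUcont : ∀ ξ, AdmCurve ι M T ξ → ∀ v : B,
      ContinuousOn (fun q : ℝ × ℝ => U ξ q.1 q.2 v)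
        {q : ℝ × ℝ | 0 ≤ q.1 ∧ q.1 ≤ q.2 ∧ q.2 ≤ T})
    (hgen₁ : ∀ ξ, AdmCurve ι M T ξ → ∀ (f : D) (t : ℝ), t ∈ Icc (0:ℝ) T →
      ∀ s ∈ Icc t T,
      HasDerivWithinAt (fun r => U ξ t r (ι f)) (U ξ t s (A ξ s f)) (Icc t T) s)
    (hgen₂ : ∀ ξ, AdmCurve ι M T ξ → ∀ (f : D) (r : ℝ), r ∈ Icc (0:ℝ) T →
      ∀ s ∈ Icc (0:ℝ) r,
      HasDerivWithinAt (fun q => U ξ q r (ι f)) (-(A ξ s (UD ξ s r f)))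
        (Icc (0:ℝ) r) s)
    (hadapt : ∀ ξ η t, t ∈ Icc (0:ℝ) T → (∀ r ∈ Icc (0:ℝ) t, ξ r = η r) →
      U ξ 0 t = U η 0 t)
    {η ζ : ℝ → StrongDual ℝ B} (hη : AdmCurve ι M T η) (hζ : AdmCurve ι M T ζ) (m : ℕ)
    (hm : ∀ s ∈ Icc 0 T, ‖embDual ι (η s) - embDual ι (ζ s)‖ ≤
      (c₁ * c₂ * c₃ * K * s) ^ m / m.factorial)
    {r : ℝ} (hr : r ∈ Icc 0 T) :
    ‖embDual ι (μ.comp (U η 0 r)) - embDual ι (μ.comp (U ζ 0 r))‖ ≤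
      (c₁ * c₂ * c₃ * K * r) ^ (m + 1) / (m + 1).factorial := by
  set C := c₁ * c₂ * c₃ * K
  have hC : 0 ≤ C := by positivity
  have hφmono : MonotoneOn (fun s => (C * s) ^ m / m.factorial) (Ici 0) :=
    fun s hs s' _ hss' => by dsimp only; gcongr; exact mul_nonneg hC hs
  have hφcont : Continuous fun s => (C * s) ^ m / m.factorial := by fun_prop
  refine ContinuousLinearMap.opNorm_le_bound _ (by have := hr.1; positivity) fun f => ?_
  have hderiv : ∀ x ∈ Icc 0 r, HasDerivWithinAt (fun q => μ (U η 0 q (U ζ q r (ι f))))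
      (μ (U η 0 x (A η x (UD ζ x r f) - A ζ x (UD ζ x r f)))) (Icc 0 r) x := fun x hx =>
    μ.hasFDerivAt.comp_hasDerivWithinAt x
      (hasDerivWithinAt_duhamel hUDcompat hUbdd hUcont hgen₁ hgen₂ hη hζ f hr hx)
  have hbound : ∀ x ∈ Ico 0 r, ‖μ (U η 0 x (A η x (UD ζ x r f) - A ζ x (UD ζ x r f)))‖ ≤
      ‖f‖ * (C * ((C * x) ^ m / m.factorial)) := by
    intro x hx
    have hxT : x ∈ Icc 0 T := ⟨hx.1, hx.2.le.trans hr.2⟩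
    calc ‖μ (U η 0 x (A η x (UD ζ x r f) - A ζ x (UD ζ x r f)))‖
        ≤ K * (c₃ * (c₁ * ((C * x) ^ m / m.factorial)) * ‖UD ζ x r f‖) :=
          μ.le_of_opNorm_le hμ _ |>.trans <| by
            gcongr
            exact norm_propagator_generator_sub_le hT hMconv hc₁ hc₃ hAlip hUbdd hgen₁ hadapt
              hη hζ hφmono hφcont hm hxT _
      _ ≤ K * (c₃ * (c₁ * ((C * x) ^ m / m.factorial)) * (c₂ * ‖f‖)) := by
          have := hx.1
          gcongr
          exact (UD ζ x r).le_of_opNorm_le (hUDbdd ζ hζ x r hx.1 hx.2.le hr.2) f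
      _ = ‖f‖ * (C * ((C * x) ^ m / m.factorial)) := by ring
  simpa [embDual, hUid, mul_comm] using norm_sub_le_of_norm_deriv_le_pow m hr.1 hderiv hbound

theorem norm_embDual_comp_propagator_sub_self_le {K : ℝ} (hK : 0 ≤ K) (hc₁ : 0 ≤ c₁)
    (hc₂ : 0 ≤ c₂) (hc₃ : 0 ≤ c₃) {μ : StrongDual ℝ B} (hμ : ‖μ‖ ≤ K)
    (hAbdd : ∀ ξ, AdmCurve ι M T ξ → ∀ t ∈ Icc (0:ℝ) T, ‖A ξ t‖ ≤ c₁)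
    (hUid : ∀ ξ t, U ξ t t = ContinuousLinearMap.id ℝ B)
    (hUbdd : ∀ ξ, AdmCurve ι M T ξ → ∀ t s, 0 ≤ t → t ≤ s → s ≤ T → ‖U ξ t s‖ ≤ c₃)
    (hUDbdd : ∀ ξ, AdmCurve ι M T ξ → ∀ t s, 0 ≤ t → t ≤ s → s ≤ T → ‖UD ξ t s‖ ≤ c₂)
    (hgen₂ : ∀ ξ, AdmCurve ι M T ξ → ∀ (f : D) (r : ℝ), r ∈ Icc (0:ℝ) T →
      ∀ s ∈ Icc (0:ℝ) r,
      HasDerivWithinAt (fun q => U ξ q r (ι f)) (-(A ξ s (UD ξ s r f)))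
        (Icc (0:ℝ) r) s)
    {ξ : ℝ → StrongDual ℝ B} (hξ : AdmCurve ι M T ξ) {r : ℝ} (hr : r ∈ Icc 0 T) :
    ‖embDual ι (μ.comp (U ξ 0 r)) - embDual ι μ‖ ≤ c₁ * c₂ * c₃ * K * r := by
  refine ContinuousLinearMap.opNorm_le_bound _ (by have := hr.1; positivity) fun f => ?_
  -- `U ξ 0 0 = id`, so the bound `c₃` applies to `μ` itself.
  have hμ₃ : ∀ v, ‖μ v‖ ≤ K * (c₃ * ‖v‖) := fun v => by
    calc ‖μ v‖ = ‖μ (U ξ 0 0 v)‖ := by rw [hUid]; rfl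
      _ ≤ K * (c₃ * ‖v‖) := μ.le_of_opNorm_le hμ _ |>.trans <| by
          gcongr
          exact (U ξ 0 0).le_of_opNorm_le (hUbdd ξ hξ 0 0 le_rfl le_rfl (hr.1.trans hr.2)) v
  have hderiv : ∀ x ∈ Icc 0 r, HasDerivWithinAt (fun q => μ (U ξ q r (ι f)))
      (μ (-(A ξ x (UD ξ x r f)))) (Icc 0 r) x := fun x hx =>
    μ.hasFDerivAt.comp_hasDerivWithinAt x (hgen₂ ξ hξ f r hr x hx)
  have hbound : ∀ x ∈ Ico 0 r, ‖μ (-(A ξ x (UD ξ x r f)))‖ ≤ c₁ * c₂ * c₃ * K * ‖f‖ := by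
    intro x hx
    calc ‖μ (-(A ξ x (UD ξ x r f)))‖ ≤ K * (c₃ * ‖A ξ x (UD ξ x r f)‖) := by
          rw [map_neg, norm_neg]
          exact hμ₃ _
      _ ≤ K * (c₃ * (c₁ * (c₂ * ‖f‖))) := by
          gcongr
          refine (A ξ x).le_of_opNorm_le (hAbdd ξ hξ x ⟨hx.1, hx.2.le.trans hr.2⟩) _ |>.trans ?_
          gcongr
          exact (UD ξ x r).le_of_opNorm_le (hUDbdd ξ hξ x r hx.1 hx.2.le hr.2) f
      _ = c₁ * c₂ * c₃ * K * ‖f‖ := by ring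
  have := norm_image_sub_le_of_norm_deriv_le_segment' hderiv hbound r (right_mem_Icc.2 hr.1)
  rw [norm_sub_rev] at this
  simpa [embDual, hUid, mul_right_comm _ ‖f‖] using this

end

theorem stmt4_general
    {B D : Type*} [NormedAddCommGroup B] [NormedSpace ℝ B]
    [NormedAddCommGroup D] [NormedSpace ℝ D]
    (ι : D →L[ℝ] B)
    (T K c₁ c₂ c₃ : ℝ) (hT : 0 < T) (hK : 0 < K)
    (hc₁ : 0 < c₁) (hc₂ : 0 < c₂) (hc₃ : 0 < c₃)
    (M : Set (StrongDual ℝ B)) (hMconv : Convex ℝ M)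
    (hMbdd : ∀ ν ∈ M, ‖ν‖ ≤ K)
    (μ : StrongDual ℝ B) (hμ : μ ∈ M)
    (A : (ℝ → StrongDual ℝ B) → ℝ → (D →L[ℝ] B))
    (U : (ℝ → StrongDual ℝ B) → ℝ → ℝ → (B →L[ℝ] B))
    (UD : (ℝ → StrongDual ℝ B) → ℝ → ℝ → (D →L[ℝ] D))
    (hAbdd : ∀ ξ, AdmCurve ι M T ξ → ∀ t ∈ Icc (0:ℝ) T, ‖A ξ t‖ ≤ c₁)
    (hAlip : ∀ ξ η, AdmCurve ι M T ξ → AdmCurve ι M T η → ∀ t ∈ Icc (0:ℝ) T,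
      ‖A ξ t - A η t‖ ≤
        c₁ * ⨆ s : Icc (0:ℝ) T, ‖embDual ι (ξ (s:ℝ)) - embDual ι (η (s:ℝ))‖)
    (hUid : ∀ ξ t, U ξ t t = ContinuousLinearMap.id ℝ B)
    (hUDcompat : ∀ ξ t s f, ι (UD ξ t s f) = U ξ t s (ι f))
    (hUbdd : ∀ ξ, AdmCurve ι M T ξ → ∀ t s, 0 ≤ t → t ≤ s → s ≤ T → ‖U ξ t s‖ ≤ c₃)
    (hUDbdd : ∀ ξ, AdmCurve ι M T ξ → ∀ t s, 0 ≤ t → t ≤ s → s ≤ T → ‖UD ξ t s‖ ≤ c₂)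
    (hUcont : ∀ ξ, AdmCurve ι M T ξ → ∀ v : B,
      ContinuousOn (fun q : ℝ × ℝ => U ξ q.1 q.2 v)
        {q : ℝ × ℝ | 0 ≤ q.1 ∧ q.1 ≤ q.2 ∧ q.2 ≤ T})
    (hgen₁ : ∀ ξ, AdmCurve ι M T ξ → ∀ (f : D) (t : ℝ), t ∈ Icc (0:ℝ) T →
      ∀ s ∈ Icc t T,
      HasDerivWithinAt (fun r => U ξ t r (ι f)) (U ξ t s (A ξ s f)) (Icc t T) s)
    (hgen₂ : ∀ ξ, AdmCurve ι M T ξ → ∀ (f : D) (r : ℝ), r ∈ Icc (0:ℝ) T →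
      ∀ s ∈ Icc (0:ℝ) r,
      HasDerivWithinAt (fun q => U ξ q r (ι f)) (-(A ξ s (UD ξ s r f)))
        (Icc (0:ℝ) r) s)
    (hadapt : ∀ ξ η t, t ∈ Icc (0:ℝ) T → (∀ r ∈ Icc (0:ℝ) t, ξ r = η r) →
      U ξ 0 t = U η 0 t)
    (ξseq : ℕ → ℝ → StrongDual ℝ B)
    (hadm : ∀ n, AdmCurve ι M T (ξseq n))
    (hzero : ∀ t, ξseq 0 t = μ)
    (hrec : ∀ n, ∀ t ∈ Icc (0:ℝ) T, ξseq (n + 1) t = μ.comp (U (ξseq n) 0 t)) :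
    ∀ n : ℕ, 1 ≤ n → ∀ t ∈ Icc (0:ℝ) T, ∀ r ∈ Icc (0:ℝ) t,
      ‖embDual ι (ξseq n r) - embDual ι (ξseq (n - 1) r)‖ ≤
        (c₁ * c₂ * c₃ * K * t) ^ n / (n.factorial : ℝ) := by
  intro n hn t ht r hr
  obtain ⟨m, rfl⟩ := Nat.exists_eq_add_of_le' hn
  set C := c₁ * c₂ * c₃ * K
  have hpicard : ∀ m : ℕ, ∀ s ∈ Icc 0 T,
      ‖embDual ι (ξseq (m + 1) s) - embDual ι (ξseq m s)‖ ≤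
        (C * s) ^ (m + 1) / (m + 1).factorial := by
    intro m
    induction m with
    | zero =>
      intro s hs
      rw [hrec 0 s hs, hzero s]
      simpa using norm_embDual_comp_propagator_sub_self_le hK.le hc₁.le hc₂.le hc₃.le
        (hMbdd μ hμ) hAbdd hUid hUbdd hUDbdd hgen₂ (hadm 0) hs
    | succ m ih =>
      intro s hs
      rw [hrec (m + 1) s hs, hrec m s hs]
      exact norm_embDual_comp_propagator_sub_le hT hMconv hK.le hc₁.le hc₂.le hc₃.le
        (hMbdd μ hμ) hAlip hUid hUDcompat hUbdd hUDbdd hUcont hgen₁ hgen₂ hadapt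
        (hadm _) (hadm _) (m + 1) ih hs
  calc ‖embDual ι (ξseq (m + 1) r) - embDual ι (ξseq (m + 1 - 1) r)‖
      ≤ (C * r) ^ (m + 1) / (m + 1).factorial := hpicard m r ⟨hr.1, hr.2.trans ht.2⟩
    _ ≤ (C * t) ^ (m + 1) / (m + 1).factorial := by
        have := hr.1
        gcongr
        exact hr.2

/-- the Picard iterates `ξⁿ_t = Ũ^{t,0}[ξ^{n−1}_{≤t}]μ` of the adapted
kinetic equation satisfy `sup_{0≤r≤t} ‖ξⁿ_r − ξ^{n−1}_r‖_{D*} ≤ (c₁c₂c₃Kt)ⁿ/n!`. -/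
theorem stmt4
    {B D : Type*} [NormedAddCommGroup B] [NormedSpace ℝ B] [CompleteSpace B]
    [NormedAddCommGroup D] [NormedSpace ℝ D] [CompleteSpace D]
    (ι : D →L[ℝ] B) (hιdense : DenseRange ι) (hιnorm : ∀ f : D, ‖ι f‖ ≤ ‖f‖)
    (T K c₁ c₂ c₃ : ℝ) (hT : 0 < T) (hK : 0 < K)
    (hc₁ : 0 < c₁) (hc₂ : 0 < c₂) (hc₃ : 0 < c₃)
    (M : Set (StrongDual ℝ B)) (hMne : M.Nonempty) (hMconv : Convex ℝ M)
    (hMbdd : ∀ ν ∈ M, ‖ν‖ ≤ K) (hMclB : IsClosed M)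
    (hMclD : IsClosed (embDual ι '' M))
    (μ : StrongDual ℝ B) (hμ : μ ∈ M)
    (A : (ℝ → StrongDual ℝ B) → ℝ → (D →L[ℝ] B))
    (U : (ℝ → StrongDual ℝ B) → ℝ → ℝ → (B →L[ℝ] B))
    (UD : (ℝ → StrongDual ℝ B) → ℝ → ℝ → (D →L[ℝ] D))
    (hAbdd : ∀ ξ, AdmCurve ι M T ξ → ∀ t ∈ Icc (0:ℝ) T, ‖A ξ t‖ ≤ c₁)
    (hAlip : ∀ ξ η, AdmCurve ι M T ξ → AdmCurve ι M T η → ∀ t ∈ Icc (0:ℝ) T,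
      ‖A ξ t - A η t‖ ≤
        c₁ * ⨆ s : Icc (0:ℝ) T, ‖embDual ι (ξ (s:ℝ)) - embDual ι (η (s:ℝ))‖)
    (hUid : ∀ ξ t, U ξ t t = ContinuousLinearMap.id ℝ B)
    (hUchain : ∀ ξ t s r, t ≤ s → s ≤ r → (U ξ t s).comp (U ξ s r) = U ξ t r)
    (hUDcompat : ∀ ξ t s f, ι (UD ξ t s f) = U ξ t s (ι f))
    (hUbdd : ∀ ξ, AdmCurve ι M T ξ → ∀ t s, 0 ≤ t → t ≤ s → s ≤ T → ‖U ξ t s‖ ≤ c₃)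
    (hUDbdd : ∀ ξ, AdmCurve ι M T ξ → ∀ t s, 0 ≤ t → t ≤ s → s ≤ T → ‖UD ξ t s‖ ≤ c₂)
    (hUcont : ∀ ξ, AdmCurve ι M T ξ → ∀ v : B,
      ContinuousOn (fun q : ℝ × ℝ => U ξ q.1 q.2 v)
        {q : ℝ × ℝ | 0 ≤ q.1 ∧ q.1 ≤ q.2 ∧ q.2 ≤ T})
    (hgen₁ : ∀ ξ, AdmCurve ι M T ξ → ∀ (f : D) (t : ℝ), t ∈ Icc (0:ℝ) T →
      ∀ s ∈ Icc t T,
      HasDerivWithinAt (fun r => U ξ t r (ι f)) (U ξ t s (A ξ s f)) (Icc t T) s)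
    (hgen₂ : ∀ ξ, AdmCurve ι M T ξ → ∀ (f : D) (r : ℝ), r ∈ Icc (0:ℝ) T →
      ∀ s ∈ Icc (0:ℝ) r,
      HasDerivWithinAt (fun q => U ξ q r (ι f)) (-(A ξ s (UD ξ s r f)))
        (Icc (0:ℝ) r) s)
    (hpres : ∀ ξ, AdmCurve ι M T ξ → ∀ t s, 0 ≤ t → t ≤ s → s ≤ T →
      ∀ ν ∈ M, ν.comp (U ξ t s) ∈ M)
    (hadapt : ∀ ξ η t, t ∈ Icc (0:ℝ) T → (∀ r ∈ Icc (0:ℝ) t, ξ r = η r) →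
      U ξ 0 t = U η 0 t)
    (ξseq : ℕ → ℝ → StrongDual ℝ B)
    (hadm : ∀ n, AdmCurve ι M T (ξseq n))
    (hzero : ∀ t, ξseq 0 t = μ)
    (hrec : ∀ n, ∀ t ∈ Icc (0:ℝ) T, ξseq (n + 1) t = μ.comp (U (ξseq n) 0 t)) :
    ∀ n : ℕ, 1 ≤ n → ∀ t ∈ Icc (0:ℝ) T, ∀ r ∈ Icc (0:ℝ) t,
      ‖embDual ι (ξseq n r) - embDual ι (ξseq (n - 1) r)‖ ≤
        (c₁ * c₂ * c₃ * K * t) ^ n / (n.factorial : ℝ) :=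
  stmt4_general ι T K c₁ c₂ c₃ hT hK hc₁ hc₂ hc₃ M hMconv hMbdd μ hμ A U UD hAbdd hAlip hUid
    hUDcompat hUbdd hUDbdd hUcont hgen₁ hgen₂ hadapt ξseq hadm hzero hrec
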